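/- Let O(n) = ⌊(n+2)/2⌋ - ⌊(n+2)/3⌋ and P(n) = Σ_{d|n} μ(d)·O(n/d). For every n ≥ 2, if P(n) = O(n) then n is prime. -/

import Mathlib

def OrbitCount (n : ℕ) : ℤ := ((n + 2) / 2 : ℕ) - ((n + 2) / 3 : ℕ)

def PrimCount (n : ℕ) : ℤ :=
  ∑ d ∈ n.divisors, ArithmeticFunction.moebius d * OrbitCount (n / d)

/-!
`OrbitCount n` is the number of integers `s` with `n / 3 ≤ s ≤ n / 2`. For `d ∣ n` the
multiples of `d` among them are `d` times the ones for `n / d`, so Möbius inversion identifies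
`PrimCount n` with the number of those `s` coprime to `n`. If `n = q m` with `q` prime and
`m ≥ 2`, then `s = q ⌊m / 2⌋` is admissible but shares the factor `q` with `n`, so
`PrimCount n < OrbitCount n`.
-/

open Finset ArithmeticFunction
open scoped ArithmeticFunction.Moebius

theorem ArithmeticFunction.sum_divisors_moebius (m : ℕ) :
    ∑ d ∈ m.divisors, μ d = if m = 1 then 1 else 0 := by
  rw [← coe_mul_zeta_apply, moebius_mul_coe_zeta, one_apply]

theorem card_filter_coprime_eq_sum_moebius (S : Finset ℕ) {n : ℕ} (hn : n ≠ 0) :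
    (#{s ∈ S | n.Coprime s} : ℤ) = ∑ d ∈ n.divisors, μ d * #{s ∈ S | d ∣ s} := by
  have divisors_dvd (s : ℕ) : {d ∈ n.divisors | d ∣ s} = (n.gcd s).divisors := by
    rw [← Nat.divisors_filter_dvd_of_dvd hn (Nat.gcd_dvd_left n s)]
    refine filter_congr fun d hd => ?_
    rw [Nat.dvd_gcd_iff, and_iff_right (Nat.dvd_of_mem_divisors hd)]
  calc (#{s ∈ S | n.Coprime s} : ℤ)
      = ∑ s ∈ S, ∑ d ∈ {d ∈ n.divisors | d ∣ s}, (μ d : ℤ) := by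
        simp only [divisors_dvd, sum_divisors_moebius, Nat.Coprime, natCast_card_filter]
    _ = ∑ d ∈ n.divisors, μ d * #{s ∈ S | d ∣ s} := by
        simp only [sum_filter, natCast_card_filter, mul_sum, mul_ite, mul_one, mul_zero]
        exact sum_comm

def orbitSet (n : ℕ) : Finset ℕ := {s ∈ range (n + 1) | n ≤ 3 * s ∧ 2 * s ≤ n}

theorem mem_orbitSet {n s : ℕ} : s ∈ orbitSet n ↔ n ≤ 3 * s ∧ 2 * s ≤ n := by
  simp only [orbitSet, mem_filter, mem_range]
  omega

theorem orbitCount_eq_card (n : ℕ) : OrbitCount n = #(orbitSet n) := by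
  have : orbitSet n = Icc ((n + 2) / 3) (n / 2) := by
    ext s
    rw [mem_orbitSet, mem_Icc]
    omega
  rw [OrbitCount, this, Nat.card_Icc]
  omega

theorem mul_mem_orbitSet_mul_iff {d s m : ℕ} (hd : 0 < d) :
    d * s ∈ orbitSet (d * m) ↔ s ∈ orbitSet m := by
  simp only [mem_orbitSet, mul_left_comm _ d, Nat.mul_le_mul_left_iff hd]

theorem card_filter_dvd_orbitSet {d : ℕ} (hd : 0 < d) (m : ℕ) :
    #{s ∈ orbitSet (d * m) | d ∣ s} = #(orbitSet m) := by
  refine (card_nbij (d * ·) (fun s hs => ?_) (fun a _ b _ h => Nat.eq_of_mul_eq_mul_left hd h)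
    (fun t ht => ?_)).symm
  · exact mem_filter.2 ⟨(mul_mem_orbitSet_mul_iff hd).2 hs, dvd_mul_right d s⟩
  · obtain ⟨ht, s, rfl⟩ := mem_filter.1 ht
    exact ⟨s, (mul_mem_orbitSet_mul_iff hd).1 ht, rfl⟩

theorem primCount_eq_card {n : ℕ} (hn : n ≠ 0) :
    PrimCount n = #{s ∈ orbitSet n | n.Coprime s} := by
  rw [card_filter_coprime_eq_sum_moebius _ hn, PrimCount]
  refine sum_congr rfl fun d hd => ?_
  obtain ⟨m, hm⟩ := Nat.dvd_of_mem_divisors hd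
  have hd0 : 0 < d := Nat.pos_of_mem_divisors hd
  rw [orbitCount_eq_card, hm, Nat.mul_div_cancel_left m hd0, card_filter_dvd_orbitSet hd0]

theorem exists_mem_orbitSet_not_coprime {n : ℕ} (hn : 2 ≤ n) (hnp : ¬n.Prime) :
    ∃ s ∈ orbitSet n, ¬n.Coprime s := by
  obtain ⟨q, hq, m, rfl⟩ := Nat.exists_prime_and_dvd (show n ≠ 1 by omega)
  have hm : 2 ≤ m := by
    by_contra! hm
    interval_cases m <;> simp_all
  refine ⟨q * (m / 2), (mul_mem_orbitSet_mul_iff hq.pos).2 (mem_orbitSet.2 (by omega)), ?_⟩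
  exact Nat.not_coprime_of_dvd_of_dvd hq.one_lt (dvd_mul_right q m) (dvd_mul_right q _)

theorem prim_eq_orbit_imp_prime (n : ℕ) (hn : 2 ≤ n) (h : PrimCount n = OrbitCount n) :
    n.Prime := by
  by_contra hnp
  obtain ⟨s, hs, hns⟩ := exists_mem_orbitSet_not_coprime hn hnp
  have hlt : #{s ∈ orbitSet n | n.Coprime s} < #(orbitSet n) :=
    card_lt_card (filter_ssubset.2 ⟨s, hs, hns⟩)
  rw [primCount_eq_card (by omega), orbitCount_eq_card] at h
  omega
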